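/- arXiv:2010.10883 — 3 statements merged into one kernel-verified Lean document; each statement's English description precedes it below -/
import Mathlib

section
/- Suppose h : D → ℝ is a zeroing control barrier function for the control-affine system ẋ = f(x) + g(x)u with extended class-K function α, i.e., for all x ∈ D there exists u ∈ U with L_f h(x) + L_g h(x)u + α(h(x)) ≥ 0. Let ψ be a nondecreasing continuously differentiable function on an open set containing [βξ, ξ] with ψ(βξ) = βξ > 0, and define h̃(x) = h(x) if h(x) ≤ βξ, ψ(h(x)) if βξ < h(x) < ξ, and ψ(ξ) if h(x) ≥ ξ. Assume furthermore there exists a locally Lipschitz γ : D → U with L_f h(x) + L_g h(x)γ(x) ≥ 0 for all x ∈ D. Then for every x ∈ D, sup_{u ∈ U} [L_f h̃(x) + L_g h̃(x)u + α(h̃(x))] ≥ 0, i.e., h̃ satisfies the ZCBF inequality on D. -/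
/-!
Write `h̃ = σ ∘ h` with the saturation `σ`: `σ y = y` for `y ≤ βξ`, `σ y = ψ y` on `(βξ, ξ)`
and `σ y = ψ ξ` from `ξ` on; `σ` is nondecreasing because `ψ (βξ) = βξ`. Where `h x < βξ`, `h̃` agrees with `h` near `x`
and the ZCBF input for `h` works. Elsewhere `h̃ x ≥ βξ > 0`, so `α (h̃ x) > 0`, and it suffices
that the evading input `γ x` makes the derivative of `h̃` along `w = f x + g x (γ x)`
nonnegative: on `(βξ, ξ)` by the chain rule with `ψ' ≥ 0`, from `ξ` on because `h̃` attains
its maximum, and at `βξ` because `h̃ ≥ min h (βξ)` bounds the right difference quotients of `h̃`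
along `w` below by the minimum of those of `h` and `0`, which tends to `0`.
-/

open Filter Set Topology

theorem HasDerivAt.nonneg_of_min_le {a b : ℝ → ℝ} {a' b' t₀ : ℝ} (ha : HasDerivAt a a' t₀)
    (hb : HasDerivAt b b' t₀) (h₀ : b t₀ = a t₀) (hle : ∀ t, min (a t) (a t₀) ≤ b t)
    (ha' : 0 ≤ a') : 0 ≤ b' := by
  have hright : 𝓝[>] t₀ ≤ 𝓝[≠] t₀ := nhdsWithin_mono t₀ fun t ht => ne_of_gt ht
  have hslope_a : Tendsto (fun t => min (slope a t₀ t) 0) (𝓝[>] t₀) (𝓝 0) := by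
    simpa [min_eq_right ha'] using
      ((hasDerivAt_iff_tendsto_slope.mp ha).mono_left hright).min (tendsto_const_nhds (x := 0))
  refine le_of_tendsto_of_tendsto hslope_a
    ((hasDerivAt_iff_tendsto_slope.mp hb).mono_left hright) ?_
  filter_upwards [self_mem_nhdsWithin] with t (ht : t₀ < t)
  have hpos : 0 < t - t₀ := sub_pos.mpr ht
  rw [slope_def_field, slope_def_field, h₀]
  rcases min_le_iff.mp (hle t) with hab | hab
  · exact (min_le_left _ _).trans (div_le_div_of_nonneg_right (by linarith) hpos.le)
  · exact (min_le_right _ _).trans (div_nonneg (by linarith) hpos.le)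

theorem fderiv_apply_nonneg_of_min_le {E : Type*} [NormedAddCommGroup E] [NormedSpace ℝ E]
    {φ h : E → ℝ} {x w : E} (hφ : DifferentiableAt ℝ φ x) (hh : DifferentiableAt ℝ h x)
    (hx : φ x = h x) (hle : ∀ y, min (h y) (h x) ≤ φ y) (hw : 0 ≤ fderiv ℝ h x w) :
    0 ≤ fderiv ℝ φ x w := by
  refine (hh.hasFDerivAt.hasLineDerivAt w).nonneg_of_min_le (hφ.hasFDerivAt.hasLineDerivAt w)
    (by simpa using hx) (fun t => by simpa using hle _) hw

noncomputable def saturation (c ξ : ℝ) (ψ : ℝ → ℝ) (y : ℝ) : ℝ :=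
  if y ≤ c then y else if y < ξ then ψ y else ψ ξ

section Saturation

variable {c ξ : ℝ} {ψ : ℝ → ℝ}

theorem saturation_eventuallyEq_id {y : ℝ} (hy : y < c) : saturation c ξ ψ =ᶠ[𝓝 y] id := by
  filter_upwards [Iio_mem_nhds hy] with z (hz : z < c)
  simp [saturation, hz.le]

theorem saturation_eventuallyEq {y : ℝ} (hcy : c < y) (hyξ : y < ξ) :
    saturation c ξ ψ =ᶠ[𝓝 y] ψ := by
  filter_upwards [Ioo_mem_nhds hcy hyξ] with z hz
  simp [saturation, not_le.mpr hz.1, hz.2]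

theorem saturation_of_ge (hcξ : c < ξ) {y : ℝ} (hy : ξ ≤ y) : saturation c ξ ψ y = ψ ξ := by
  simp [saturation, not_le.mpr (hcξ.trans_le hy), not_lt.mpr hy]

theorem monotone_saturation (hcξ : c < ξ) (hψ : MonotoneOn ψ (Icc c ξ)) (hψc : ψ c = c) :
    Monotone (saturation c ξ ψ) := by
  have hψ_ge {y : ℝ} (hy : y ∈ Icc c ξ) : c ≤ ψ y := hψc ▸ hψ ⟨le_rfl, hcξ.le⟩ hy hy.1
  have hψξ : c ≤ ψ ξ := hψ_ge ⟨hcξ.le, le_rfl⟩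
  intro a b hab
  unfold saturation
  split_ifs
  all_goals first
    | linarith
    | linarith [hψ_ge (y := b) ⟨by linarith, by linarith⟩]
    | exact hψ ⟨by linarith, by linarith⟩ ⟨by linarith, by linarith⟩ (by linarith)

theorem min_le_saturation (hcξ : c < ξ) (hψ : MonotoneOn ψ (Icc c ξ)) (hψc : ψ c = c) (y : ℝ) :
    min y c ≤ saturation c ξ ψ y := by
  rcases le_total y c with hy | hy
  · simp [saturation, hy]
  · calc min y c = saturation c ξ ψ c := by simp [saturation, hy]
      _ ≤ saturation c ξ ψ y := monotone_saturation hcξ hψ hψc hy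

variable {E : Type*} [NormedAddCommGroup E] [NormedSpace ℝ E] {h : E → ℝ} {x w : E}

theorem fderiv_saturation_comp_apply_nonneg_of_mem_Ioo (hh : DifferentiableAt ℝ h x)
    (hx : h x ∈ Ioo c ξ) (hψd : DifferentiableAt ℝ ψ (h x)) (hψ : MonotoneOn ψ (Icc c ξ))
    (hw : 0 ≤ fderiv ℝ h x w) : 0 ≤ fderiv ℝ (saturation c ξ ψ ∘ h) x w := by
  have hψ' : 0 ≤ deriv ψ (h x) :=
    hψd.hasDerivAt.hasDerivWithinAt.nonneg_of_monotoneOn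
      (uniqueDiffOn_Icc (hx.1.trans hx.2) _ (Ioo_subset_Icc_self hx)).accPt hψ
  have hev : saturation c ξ ψ ∘ h =ᶠ[𝓝 x] ψ ∘ h :=
    (saturation_eventuallyEq hx.1 hx.2).comp_tendsto hh.continuousAt
  rw [hev.fderiv_eq, (hψd.hasDerivAt.comp_hasFDerivAt x hh.hasFDerivAt).fderiv]
  exact mul_nonneg hψ' hw

theorem fderiv_saturation_comp_apply_nonneg (hcξ : c < ξ)
    (hψd : ∀ y ∈ Ioo c ξ, DifferentiableAt ℝ ψ y) (hψ : MonotoneOn ψ (Icc c ξ)) (hψc : ψ c = c)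
    (hh : DifferentiableAt ℝ h x) (hx : c ≤ h x) (hw : 0 ≤ fderiv ℝ h x w) :
    0 ≤ fderiv ℝ (saturation c ξ ψ ∘ h) x w := by
  rcases hx.eq_or_lt with hcx | hcx
  · by_cases hd : DifferentiableAt ℝ (saturation c ξ ψ ∘ h) x
    · refine fderiv_apply_nonneg_of_min_le hd hh ?_ (fun y => ?_) hw
      · simp [saturation, ← hcx]
      · simpa [← hcx] using min_le_saturation hcξ hψ hψc (h y)
    · simp [fderiv_zero_of_not_differentiableAt hd]
  rcases lt_or_ge (h x) ξ with hxξ | hxξ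
  · exact fderiv_saturation_comp_apply_nonneg_of_mem_Ioo hh ⟨hcx, hxξ⟩ (hψd _ ⟨hcx, hxξ⟩) hψ hw
  · have hmax : IsMaxOn (saturation c ξ ψ ∘ h) univ x := fun y _ => by
      change saturation c ξ ψ (h y) ≤ saturation c ξ ψ (h x)
      rw [saturation_of_ge hcξ hxξ, ← saturation_of_ge (ψ := ψ) hcξ (le_max_right (h y) ξ)]
      exact monotone_saturation hcξ hψ hψc (le_max_left _ _)
    simp [(hmax.isLocalMax univ_mem).fderiv_eq_zero]

end Saturation

theorem stmt_5_general {n m : ℕ} (ξ β : ℝ) (hξ : 0 < ξ) (hβ1 : β < 1)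
    (D : Set (EuclideanSpace ℝ (Fin n)))
    (U : Set (EuclideanSpace ℝ (Fin m)))
    (f : EuclideanSpace ℝ (Fin n) → EuclideanSpace ℝ (Fin n))
    (g : EuclideanSpace ℝ (Fin n) → EuclideanSpace ℝ (Fin m) →L[ℝ] EuclideanSpace ℝ (Fin n))
    (h : EuclideanSpace ℝ (Fin n) → ℝ) (hh : ContDiff ℝ 1 h)
    (α : ℝ → ℝ) (hαmono : StrictMono α) (hα0 : α 0 = 0)
    -- h is a ZCBF with class-K function α
    (hzcbf : ∀ x ∈ D, ∃ u ∈ U,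
      fderiv ℝ h x (f x) + fderiv ℝ h x (g x u) + α (h x) ≥ 0)
    -- ψ is nondecreasing and C¹ on an open set containing [βξ, ξ], with ψ(βξ) = βξ > 0
    (ψ : ℝ → ℝ) (O : Set ℝ) (hO : IsOpen O) (hsub : Set.Icc (β * ξ) ξ ⊆ O)
    (hψC1 : ContDiffOn ℝ 1 ψ O) (hψmono : MonotoneOn ψ O)
    (hψval : ψ (β * ξ) = β * ξ) (hβξpos : 0 < β * ξ)
    -- locally Lipschitz evading maneuver γ
    (γ : EuclideanSpace ℝ (Fin n) → EuclideanSpace ℝ (Fin m))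
    (hγU : ∀ x ∈ D, γ x ∈ U)
    (hγsafe : ∀ x ∈ D, fderiv ℝ h x (f x) + fderiv ℝ h x (g x (γ x)) ≥ 0)
    -- the saturated barrier function
    (htilde : EuclideanSpace ℝ (Fin n) → ℝ)
    (hhtilde : ∀ x, htilde x =
      if h x ≤ β * ξ then h x
      else if h x < ξ then ψ (h x)
      else ψ ξ) :
    ∀ x ∈ D, ∃ u ∈ U,
      fderiv ℝ htilde x (f x) + fderiv ℝ htilde x (g x u) + α (htilde x) ≥ 0 := by
  have hcξ : β * ξ < ξ := by nlinarith
  have hψ : MonotoneOn ψ (Icc (β * ξ) ξ) := hψmono.mono hsub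
  have hψd : ∀ y ∈ Ioo (β * ξ) ξ, DifferentiableAt ℝ ψ y := fun y hy =>
    (hψC1.differentiableOn one_ne_zero).differentiableAt
      (hO.mem_nhds (hsub (Ioo_subset_Icc_self hy)))
  have hhd : Differentiable ℝ h := hh.differentiable one_ne_zero
  obtain rfl : htilde = saturation (β * ξ) ξ ψ ∘ h := funext hhtilde
  intro x hx
  rcases lt_or_ge (h x) (β * ξ) with hlow | hhigh
  · obtain ⟨u, hu, hineq⟩ := hzcbf x hx
    have hev : saturation (β * ξ) ξ ψ ∘ h =ᶠ[𝓝 x] h :=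
      (saturation_eventuallyEq_id hlow).comp_tendsto (hhd x).continuousAt
    exact ⟨u, hu, by rwa [hev.fderiv_eq, hev.eq_of_nhds]⟩
  · refine ⟨γ x, hγU x hx, ?_⟩
    have hdir := fderiv_saturation_comp_apply_nonneg hcξ hψd hψ hψval (hhd x) hhigh
      (w := f x + g x (γ x)) (by rw [map_add]; exact hγsafe x hx)
    have hpos : 0 < α ((saturation (β * ξ) ξ ψ ∘ h) x) := hα0 ▸ hαmono
      (hβξpos.trans_le (by simpa [hhigh] using min_le_saturation hcξ hψ hψval (h x)))
    rw [map_add] at hdir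
    linarith

theorem stmt_5 {n m : ℕ} (ξ β : ℝ) (hξ : 0 < ξ) (hβ : 0 < β) (hβ1 : β < 1)
    (D : Set (EuclideanSpace ℝ (Fin n))) (hD : IsOpen D)
    (U : Set (EuclideanSpace ℝ (Fin m)))
    (f : EuclideanSpace ℝ (Fin n) → EuclideanSpace ℝ (Fin n))
    (g : EuclideanSpace ℝ (Fin n) → EuclideanSpace ℝ (Fin m) →L[ℝ] EuclideanSpace ℝ (Fin n))
    (h : EuclideanSpace ℝ (Fin n) → ℝ) (hh : ContDiff ℝ 1 h)
    (α : ℝ → ℝ) (hαcont : Continuous α) (hαmono : StrictMono α) (hα0 : α 0 = 0)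
    -- h is a ZCBF with class-K function α
    (hzcbf : ∀ x ∈ D, ∃ u ∈ U,
      fderiv ℝ h x (f x) + fderiv ℝ h x (g x u) + α (h x) ≥ 0)
    -- ψ is nondecreasing and C¹ on an open set containing [βξ, ξ], with ψ(βξ) = βξ > 0
    (ψ : ℝ → ℝ) (O : Set ℝ) (hO : IsOpen O) (hsub : Set.Icc (β * ξ) ξ ⊆ O)
    (hψC1 : ContDiffOn ℝ 1 ψ O) (hψmono : MonotoneOn ψ O)
    (hψval : ψ (β * ξ) = β * ξ) (hβξpos : 0 < β * ξ)
    -- locally Lipschitz evading maneuver γ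
    (γ : EuclideanSpace ℝ (Fin n) → EuclideanSpace ℝ (Fin m))
    (hγlip : LocallyLipschitz γ) (hγU : ∀ x ∈ D, γ x ∈ U)
    (hγsafe : ∀ x ∈ D, fderiv ℝ h x (f x) + fderiv ℝ h x (g x (γ x)) ≥ 0)
    -- the saturated barrier function
    (htilde : EuclideanSpace ℝ (Fin n) → ℝ)
    (hhtilde : ∀ x, htilde x =
      if h x ≤ β * ξ then h x
      else if h x < ξ then ψ (h x)
      else ψ ξ) :
    ∀ x ∈ D, ∃ u ∈ U,
      fderiv ℝ htilde x (f x) + fderiv ℝ htilde x (g x u) + α (htilde x) ≥ 0 :=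
  stmt_5_general ξ β hξ hβ1 D U f g h hh α hαmono hα0 hzcbf ψ O hO hsub hψC1 hψmono hψval hβξpos γ
    hγU hγsafe htilde hhtilde
end

section
/- Let α be an extended class-K function, continuously differentiable on (βξ, ξ) with nonincreasing derivative there, and let ψ satisfy: ψ(η) = η for η ≤ βξ, ψ'(η) > 0 and ψ' nonincreasing on (βξ, ξ), and ψ''(η) < 0 on (βξ, ξ). Define α₂(η) = α(ψ(η))/ψ'(η). Then for all η with η < ξ, α₂(η) ≥ α(η). -/
/-!
Let `a = βξ`. Since `ψ = id` up to `a`, `ψ'(a) = 1`, and `ψ'' < 0` gives `ψ' < 1` on `(a, ξ)`; with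
`ψ' > 0` this yields `a < ψ η ≤ η` there. Then `g = α ∘ ψ / ψ' - α` vanishes at `a` and has derivative
`α'(ψ η) - α(ψ η) ψ''(η) / ψ'(η)² - α'(η) ≥ 0`, because `α ≥ 0`, `ψ'' < 0` and `α'` is
nonincreasing; so `g ≥ 0` on `[a, ξ)`, while below `a` the two sides agree.
-/

open Set

section IdentityBelow

variable {ψ : ℝ → ℝ} {a : ℝ}

theorem deriv_eq_one_of_forall_le_eq_self {η : ℝ} (hψ : DifferentiableAt ℝ ψ η)
    (hid : ∀ x ≤ a, ψ x = x) (hη : η ≤ a) : deriv ψ η = 1 :=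
  (uniqueDiffOn_Iic a η hη).eq_deriv _ hψ.hasDerivAt.hasDerivWithinAt
    ((hasDerivWithinAt_id η (Iic a)).congr (fun x hx => hid x hx) (hid η hη))

theorem deriv_lt_one_of_deriv_deriv_neg {b η : ℝ} (hψ : ContDiff ℝ 1 ψ)
    (hid : ∀ x ≤ a, ψ x = x) (hconc : ∀ x ∈ Ioo a b, deriv (deriv ψ) x < 0)
    (hη : η ∈ Ioo a b) : deriv ψ η < 1 := by
  have hanti : StrictAntiOn (deriv ψ) (Icc a η) :=
    strictAntiOn_of_deriv_neg (convex_Icc a η) (hψ.continuous_deriv le_rfl).continuousOn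
      fun x hx => hconc x (by rw [interior_Icc] at hx; exact ⟨hx.1, hx.2.trans hη.2⟩)
  calc deriv ψ η < deriv ψ a := hanti (left_mem_Icc.2 hη.1.le) (right_mem_Icc.2 hη.1.le) hη.1
    _ = 1 := deriv_eq_one_of_forall_le_eq_self (hψ.differentiable one_ne_zero a) hid le_rfl

theorem le_self_of_deriv_le_one {η : ℝ} (hψ : Differentiable ℝ ψ) (ha : ψ a = a)
    (hle : ∀ x ∈ Ioo a η, deriv ψ x ≤ 1) (haη : a ≤ η) : ψ η ≤ η := by
  have := (convex_Icc a η).image_sub_le_mul_sub_of_deriv_le hψ.continuous.continuousOn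
    hψ.differentiableOn (by simpa only [interior_Icc] using hle)
    a (left_mem_Icc.2 haη) η (right_mem_Icc.2 haη) haη
  linarith

theorem mem_Ioc_of_deriv_deriv_neg {b η : ℝ} (hψ : ContDiff ℝ 1 ψ) (hid : ∀ x ≤ a, ψ x = x)
    (hpos : ∀ x ∈ Ioo a b, 0 < deriv ψ x) (hconc : ∀ x ∈ Ioo a b, deriv (deriv ψ) x < 0)
    (hη : η ∈ Ioo a b) : ψ η ∈ Ioc a η := by
  have hsub : Ioo a η ⊆ Ioo a b := Ioo_subset_Ioo_right hη.2.le
  have hmono : StrictMonoOn ψ (Icc a η) :=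
    strictMonoOn_of_deriv_pos (convex_Icc a η) hψ.continuous.continuousOn
      fun x hx => hpos x (hsub (by rwa [interior_Icc] at hx))
  refine ⟨?_, le_self_of_deriv_le_one (hψ.differentiable one_ne_zero) (hid a le_rfl)
    (fun x hx => (deriv_lt_one_of_deriv_deriv_neg hψ hid hconc (hsub hx)).le) hη.1.le⟩
  simpa only [hid a le_rfl] using
    hmono (left_mem_Icc.2 hη.1.le) (right_mem_Icc.2 hη.1.le) hη.1

end IdentityBelow

theorem hasDerivAt_comp_div {f u v : ℝ → ℝ} {f' v' t : ℝ} (hf : HasDerivAt f f' (u t))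
    (hu : HasDerivAt u (v t) t) (hv : HasDerivAt v v' t) (hv0 : v t ≠ 0) :
    HasDerivAt (fun s => f (u s) / v s) (f' - f (u t) * v' / v t ^ 2) t :=
  ((hf.comp t hu).div hv hv0).congr_deriv (by simp only [Function.comp_apply]; field_simp)

section Comparison

variable {α ψ : ℝ → ℝ} {a b : ℝ}

theorem monotoneOn_comp_div_deriv_sub (hαcont : ContinuousOn α (Ico a b))
    (hαC1 : ContDiffOn ℝ 1 α (Ioo a b)) (hαder : AntitoneOn (deriv α) (Ioo a b))
    (hα_nonneg : ∀ x ∈ Ioo a b, 0 ≤ α x) (hψ : ContDiff ℝ 1 ψ) (hid : ∀ x ≤ a, ψ x = x)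
    (hpos : ∀ x ∈ Ioo a b, 0 < deriv ψ x) (hconc : ∀ x ∈ Ioo a b, deriv (deriv ψ) x < 0) :
    MonotoneOn (fun t => α (ψ t) / deriv ψ t - α t) (Ico a b) := by
  have hψIoo : ∀ x ∈ Ioo a b, ψ x ∈ Ioo a b ∧ ψ x ≤ x := fun x hx =>
    have h := mem_Ioc_of_deriv_deriv_neg hψ hid hpos hconc hx
    ⟨⟨h.1, h.2.trans_lt hx.2⟩, h.2⟩
  have hψIco : ∀ x ∈ Ico a b, ψ x ∈ Ico a b ∧ deriv ψ x ≠ 0 := by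
    intro x hx
    rcases eq_or_lt_of_le hx.1 with rfl | hax
    · rw [hid a le_rfl, deriv_eq_one_of_forall_le_eq_self (hψ.differentiable one_ne_zero a) hid
        le_rfl]
      exact ⟨hx, one_ne_zero⟩
    · exact ⟨Ioo_subset_Ico_self (hψIoo x ⟨hax, hx.2⟩).1, (hpos x ⟨hax, hx.2⟩).ne'⟩
  have hcont : ContinuousOn (fun t => α (ψ t) / deriv ψ t - α t) (Ico a b) :=
    ((hαcont.comp hψ.continuous.continuousOn fun x hx => (hψIco x hx).1).div
      (hψ.continuous_deriv le_rfl).continuousOn fun x hx => (hψIco x hx).2).sub hαcont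
  have hαdiff : ∀ x ∈ Ioo a b, HasDerivAt α (deriv α x) x := fun x hx =>
    ((hαC1.differentiableOn one_ne_zero).differentiableAt (isOpen_Ioo.mem_nhds hx)).hasDerivAt
  refine monotoneOn_of_hasDerivWithinAt_nonneg (convex_Ico a b) hcont
    (f' := fun t => deriv α (ψ t) - α (ψ t) * deriv (deriv ψ) t / deriv ψ t ^ 2 - deriv α t)
    (fun t ht => ?_) fun t ht => ?_
  all_goals rw [interior_Ico] at ht
  · refine HasDerivAt.hasDerivWithinAt (HasDerivAt.sub ?_ (hαdiff t ht))
    exact hasDerivAt_comp_div (hαdiff _ (hψIoo t ht).1)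
      ((hψ.differentiable one_ne_zero) t).hasDerivAt
      (differentiableAt_of_deriv_ne_zero (hconc t ht).ne).hasDerivAt (hpos t ht).ne'
  · have hα' : deriv α t ≤ deriv α (ψ t) := hαder (hψIoo t ht).1 ht (hψIoo t ht).2
    have hcurv : α (ψ t) * deriv (deriv ψ) t / deriv ψ t ^ 2 ≤ 0 :=
      div_nonpos_of_nonpos_of_nonneg
        (mul_nonpos_of_nonneg_of_nonpos (hα_nonneg _ (hψIoo t ht).1) (hconc t ht).le)
        (sq_nonneg _)
    linarith

theorem le_comp_div_deriv {η : ℝ} (hαcont : ContinuousOn α (Ico a b))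
    (hαC1 : ContDiffOn ℝ 1 α (Ioo a b)) (hαder : AntitoneOn (deriv α) (Ioo a b))
    (hα_nonneg : ∀ x ∈ Ioo a b, 0 ≤ α x) (hψ : ContDiff ℝ 1 ψ) (hid : ∀ x ≤ a, ψ x = x)
    (hpos : ∀ x ∈ Ioo a b, 0 < deriv ψ x) (hconc : ∀ x ∈ Ioo a b, deriv (deriv ψ) x < 0)
    (hη : η < b) : α η ≤ α (ψ η) / deriv ψ η := by
  have hψ1 : ∀ x ≤ a, deriv ψ x = 1 := fun x hx =>
    deriv_eq_one_of_forall_le_eq_self (hψ.differentiable one_ne_zero x) hid hx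
  rcases le_or_gt η a with hηa | haη
  · rw [hid η hηa, hψ1 η hηa, div_one]
  have := monotoneOn_comp_div_deriv_sub hαcont hαC1 hαder hα_nonneg hψ hid hpos hconc
    (left_mem_Ico.2 (haη.trans hη)) ⟨haη.le, hη⟩ haη.le
  simp only [hid a le_rfl, hψ1 a le_rfl, div_one, sub_self] at this
  linarith

end Comparison

theorem stmt_11_general (ξ β : ℝ) (hξ : 0 < ξ) (hβ : 0 < β)
    (α : ℝ → ℝ) (hαcont : Continuous α) (hαmono : StrictMono α) (hα0 : α 0 = 0)
    (hαC1 : ContDiffOn ℝ 1 α (Set.Ioo (β * ξ) ξ))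
    (hαder : AntitoneOn (deriv α) (Set.Ioo (β * ξ) ξ))
    (ψ : ℝ → ℝ) (hψC1 : ContDiff ℝ 1 ψ)
    (hψid : ∀ η ≤ β * ξ, ψ η = η)
    (hψpos : ∀ η ∈ Set.Ioo (β * ξ) ξ, 0 < deriv ψ η)
    (hψconc : ∀ η ∈ Set.Ioo (β * ξ) ξ, deriv (deriv ψ) η < 0)
    (α₂ : ℝ → ℝ) (hα₂ : ∀ η, α₂ η = α (ψ η) / deriv ψ η) :
    ∀ η < ξ, α₂ η ≥ α η := by
  have hα_nonneg : ∀ x ∈ Ioo (β * ξ) ξ, 0 ≤ α x := fun x hx =>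
    hα0 ▸ hαmono.monotone ((mul_nonneg hβ.le hξ.le).trans hx.1.le)
  intro η hη
  rw [hα₂]
  exact le_comp_div_deriv hαcont.continuousOn hαC1 hαder hα_nonneg hψC1 hψid hψpos hψconc hη

theorem stmt_11 (ξ β : ℝ) (hξ : 0 < ξ) (hβ : 0 < β) (hβ1 : β < 1)
    (α : ℝ → ℝ) (hαcont : Continuous α) (hαmono : StrictMono α) (hα0 : α 0 = 0)
    (hαC1 : ContDiffOn ℝ 1 α (Set.Ioo (β * ξ) ξ))
    (hαder : AntitoneOn (deriv α) (Set.Ioo (β * ξ) ξ))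
    (ψ : ℝ → ℝ) (hψC1 : ContDiff ℝ 1 ψ)
    (hψid : ∀ η ≤ β * ξ, ψ η = η)
    (hψpos : ∀ η ∈ Set.Ioo (β * ξ) ξ, 0 < deriv ψ η)
    (hψanti : AntitoneOn (deriv ψ) (Set.Ioo (β * ξ) ξ))
    (hψconc : ∀ η ∈ Set.Ioo (β * ξ) ξ, deriv (deriv ψ) η < 0)
    (α₂ : ℝ → ℝ) (hα₂ : ∀ η, α₂ η = α (ψ η) / deriv ψ η) :
    ∀ η < ξ, α₂ η ≥ α η :=
  stmt_11_general ξ β hξ hβ α hαcont hαmono hα0 hαC1 hαder ψ hψC1 hψid hψpos hψconc α₂ hα₂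
end

section
/- Suppose h is a ZCBF with class-K function α, h̃ is the saturated barrier (h̃ = ψ∘h below level ξ, constant ψ(ξ) above), with α continuously differentiable and derivative nonincreasing on (βξ, ξ), and ψ identity below βξ with ψ' > 0 nonincreasing and ψ'' < 0 on (βξ, ξ). Then for every x ∈ D, K(x) ⊆ K̃(x), where K(x) = {u ∈ U : L_f h(x) + L_g h(x)u + α(h(x)) ≥ 0} and K̃(x) = {u ∈ U : L_f h̃(x) + L_g h̃(x)u + α(h̃(x)) ≥ 0}. -/
/-!
Below the level `ξ` we have `∇h̃ = ψ'(h) ∇h`, so multiplying the constraint of `K(x)` by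
`ψ'(h x) > 0` reduces the claim to `ψ'(η) α(η) ≤ α(ψ(η))` for `η < ξ`. This is an equality for
`η ≤ βξ`, where `ψ` is the identity; on `(βξ, ξ)` the difference `α ∘ ψ - ψ' α` has derivative
`ψ' (α'(ψ) - α') - ψ'' α ≥ 0`, because `ψ(η) ≤ η` and `α'` is nonincreasing, while `ψ'' < 0` and
`α ≥ 0`. At or above the level `ξ`, `h̃` attains its maximum `ψ(ξ)`, so `∇h̃ = 0` and the
constraint reads `α(ψ(ξ)) ≥ 0`.
-/

open Set Filter Topology

section Saturation

variable {ψ α : ℝ → ℝ} {a b : ℝ}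

lemma strictMonoOn_Iic_of_deriv_pos (hψ : Continuous ψ) (hpos : ∀ t < b, 0 < deriv ψ t) :
    StrictMonoOn ψ (Iic b) :=
  strictMonoOn_of_deriv_pos (convex_Iic b) hψ.continuousOn fun t ht =>
    hpos t (by rwa [interior_Iic] at ht)

lemma deriv_eq_one_of_forall_le_eq_self_s14 (hψ : Continuous (deriv ψ)) (hid : ∀ t ≤ a, ψ t = t) :
    ∀ t ≤ a, deriv ψ t = 1 := by
  have hIio : Iio a ⊆ {t | deriv ψ t = 1} := fun t ht => by
    have hψt : ψ =ᶠ[𝓝 t] id := (eventually_lt_nhds ht).mono fun s hs => hid s hs.le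
    simp [hψt.deriv_eq]
  intro t ht
  exact (isClosed_eq hψ continuous_const).closure_subset_iff.2 hIio (by rwa [closure_Iio])

lemma deriv_le_one_of_deriv_deriv_neg (hψ : ContDiff ℝ 1 ψ) (hid : ∀ t ≤ a, ψ t = t)
    (hconc : ∀ t ∈ Ioo a b, deriv (deriv ψ) t < 0) : ∀ t ∈ Icc a b, deriv ψ t ≤ 1 := by
  have hψ' : Continuous (deriv ψ) := hψ.continuous_deriv le_rfl
  have hanti : StrictAntiOn (deriv ψ) (Icc a b) :=
    strictAntiOn_of_deriv_neg (convex_Icc a b) hψ'.continuousOn fun t ht =>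
      hconc t (by rwa [interior_Icc] at ht)
  intro t ht
  calc deriv ψ t ≤ deriv ψ a := hanti.antitoneOn ⟨le_rfl, ht.1.trans ht.2⟩ ht ht.1
    _ = 1 := deriv_eq_one_of_forall_le_eq_self_s14 hψ' hid a le_rfl

lemma le_self_of_deriv_deriv_neg (hψ : ContDiff ℝ 1 ψ) (hid : ∀ t ≤ a, ψ t = t)
    (hconc : ∀ t ∈ Ioo a b, deriv (deriv ψ) t < 0) : ∀ t ∈ Icc a b, ψ t ≤ t := by
  intro t ht
  have hsub := (convex_Icc a b).image_sub_le_mul_sub_of_deriv_le hψ.continuous.continuousOn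
    (hψ.differentiable one_ne_zero).differentiableOn
    (fun s hs => deriv_le_one_of_deriv_deriv_neg hψ hid hconc s (interior_subset hs))
    a ⟨le_rfl, ht.1.trans ht.2⟩ t ht ht.1
  linarith [hid a le_rfl]

lemma mapsTo_Ioo_of_deriv_deriv_neg (hψ : ContDiff ℝ 1 ψ) (hid : ∀ t ≤ a, ψ t = t)
    (hpos : ∀ t < b, 0 < deriv ψ t) (hconc : ∀ t ∈ Ioo a b, deriv (deriv ψ) t < 0) :
    MapsTo ψ (Ioo a b) (Ioo a b) := by
  intro t ht
  have hmono := strictMonoOn_Iic_of_deriv_pos hψ.continuous hpos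
  refine ⟨?_, (le_self_of_deriv_deriv_neg hψ hid hconc t (Ioo_subset_Icc_self ht)).trans_lt ht.2⟩
  calc a = ψ a := (hid a le_rfl).symm
    _ < ψ t := hmono (ht.1.trans ht.2).le ht.2.le ht.1

lemma deriv_mul_le_comp (ha : 0 ≤ a) (hαcont : Continuous α) (hαmono : Monotone α)
    (hα0 : α 0 = 0) (hαdiff : DifferentiableOn ℝ α (Ioo a b))
    (hαder : AntitoneOn (deriv α) (Ioo a b)) (hψ : ContDiff ℝ 1 ψ) (hid : ∀ t ≤ a, ψ t = t)
    (hpos : ∀ t < b, 0 < deriv ψ t) (hconc : ∀ t ∈ Ioo a b, deriv (deriv ψ) t < 0) :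
    ∀ η < b, deriv ψ η * α η ≤ α (ψ η) := by
  have hd1 := deriv_eq_one_of_forall_le_eq_self_s14 (hψ.continuous_deriv le_rfl) hid
  intro η hηb
  rcases le_or_gt η a with hηa | hηa
  · simp [hid η hηa, hd1 η hηa]
  set F : ℝ → ℝ := fun t => α (ψ t) - deriv ψ t * α t
  set F' : ℝ → ℝ := fun t =>
    deriv α (ψ t) * deriv ψ t - (deriv (deriv ψ) t * α t + deriv ψ t * deriv α t)
  have hψt : ∀ t ∈ Ioo a b, ψ t ∈ Ioo a b := mapsTo_Ioo_of_deriv_deriv_neg hψ hid hpos hconc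
  have hFderiv : ∀ t ∈ Ioo a b, HasDerivAt F (F' t) t := fun t ht => by
    have hψ't : DifferentiableAt ℝ (deriv ψ) t :=
      differentiableAt_of_deriv_ne_zero (hconc t ht).ne
    have hαt := hαdiff.differentiableAt (isOpen_Ioo.mem_nhds ht)
    have hαψt := hαdiff.differentiableAt (isOpen_Ioo.mem_nhds (hψt t ht))
    exact (hαψt.hasDerivAt.comp t ((hψ.differentiable one_ne_zero) t).hasDerivAt).sub
      (hψ't.hasDerivAt.mul hαt.hasDerivAt)
  have hF'_nonneg : ∀ t ∈ Ioo a b, 0 ≤ F' t := fun t ht => by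
    have hαt : 0 ≤ α t := hα0 ▸ hαmono (ha.trans ht.1.le)
    have hαd : deriv α t ≤ deriv α (ψ t) :=
      hαder (hψt t ht) ht (le_self_of_deriv_deriv_neg hψ hid hconc t (Ioo_subset_Icc_self ht))
    nlinarith [mul_nonneg (hpos t ht.2).le (sub_nonneg.2 hαd),
      mul_nonneg_of_nonpos_of_nonpos (hconc t ht).le (neg_nonpos.2 hαt)]
  have hsub : interior (Icc a η) ⊆ Ioo a b := by
    rw [interior_Icc]
    exact Ioo_subset_Ioo_right hηb.le
  have hF : MonotoneOn F (Icc a η) :=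
    monotoneOn_of_hasDerivWithinAt_nonneg (convex_Icc a η)
      ((hαcont.comp hψ.continuous).sub ((hψ.continuous_deriv le_rfl).mul hαcont)).continuousOn
      (fun t ht => (hFderiv t (hsub ht)).hasDerivWithinAt) (fun t ht => hF'_nonneg t (hsub ht))
  have hFa : F a = 0 := by simp [F, hid a le_rfl, hd1 a le_rfl]
  have hFη := hF ⟨le_rfl, hηa.le⟩ ⟨hηa.le, le_rfl⟩ hηa.le
  simp only [hFa, F] at hFη
  linarith

end Saturation

section SaturatedBarrier

variable {E : Type*} {ψ : ℝ → ℝ} {ξ : ℝ} {h : E → ℝ} {x : E}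

noncomputable def saturate (ψ : ℝ → ℝ) (ξ : ℝ) (h : E → ℝ) (x : E) : ℝ :=
  if h x < ξ then ψ (h x) else ψ ξ

lemma saturate_of_lt (hx : h x < ξ) : saturate ψ ξ h x = ψ (h x) := if_pos hx

lemma saturate_of_le (hx : ξ ≤ h x) : saturate ψ ξ h x = ψ ξ := if_neg hx.not_gt

lemma saturate_le (hψ : MonotoneOn ψ (Iic ξ)) (y : E) : saturate ψ ξ h y ≤ ψ ξ := by
  rcases lt_or_ge (h y) ξ with hy | hy
  · rw [saturate_of_lt hy]
    exact hψ hy.le (mem_Iic.2 le_rfl) hy.le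
  · rw [saturate_of_le hy]

variable [NormedAddCommGroup E] [NormedSpace ℝ E]

lemma hasFDerivAt_saturate {h' : E →L[ℝ] ℝ} (hψ : DifferentiableAt ℝ ψ (h x))
    (hh : HasFDerivAt h h' x) (hx : h x < ξ) :
    HasFDerivAt (saturate ψ ξ h) (deriv ψ (h x) • h') x := by
  have heq : saturate ψ ξ h =ᶠ[𝓝 x] ψ ∘ h :=
    (hh.continuousAt.eventually (eventually_lt_nhds hx)).mono fun y hy => saturate_of_lt hy
  exact (hψ.hasDerivAt.comp_hasFDerivAt x hh).congr_of_eventuallyEq heq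

lemma fderiv_saturate_of_le (hψ : MonotoneOn ψ (Iic ξ)) (hx : ξ ≤ h x) :
    fderiv ℝ (saturate ψ ξ h) x = 0 :=
  IsLocalMax.fderiv_eq_zero <| Eventually.of_forall fun y =>
    (saturate_le hψ y).trans_eq (saturate_of_le hx).symm

end SaturatedBarrier

theorem stmt_14_general {n m : ℕ} (ξ β : ℝ) (hξ : 0 < ξ) (hβ : 0 < β)
    (D : Set (EuclideanSpace ℝ (Fin n)))
    (U : Set (EuclideanSpace ℝ (Fin m)))
    (f : EuclideanSpace ℝ (Fin n) → EuclideanSpace ℝ (Fin n))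
    (g : EuclideanSpace ℝ (Fin n) → EuclideanSpace ℝ (Fin m) →L[ℝ] EuclideanSpace ℝ (Fin n))
    (h : EuclideanSpace ℝ (Fin n) → ℝ) (hh : ContDiff ℝ 1 h)
    (α : ℝ → ℝ) (hαcont : Continuous α) (hαmono : StrictMono α) (hα0 : α 0 = 0)
    (hαC1 : ContDiffOn ℝ 1 α (Set.Ioo (β * ξ) ξ))
    (hαder : AntitoneOn (deriv α) (Set.Ioo (β * ξ) ξ))
    -- ψ: identity below βξ, ψ' > 0 nonincreasing and ψ'' < 0 on (βξ, ξ)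
    (ψ : ℝ → ℝ) (hψC1 : ContDiff ℝ 1 ψ)
    (hψid : ∀ η ≤ β * ξ, ψ η = η)
    (hψpos : ∀ η < ξ, 0 < deriv ψ η)
    (hψconc : ∀ η ∈ Set.Ioo (β * ξ) ξ, deriv (deriv ψ) η < 0)
    (hψξ : 0 < ψ ξ)
    -- the saturated barrier: h̃ = ψ ∘ h below level ξ, constant ψ(ξ) above
    (htilde : EuclideanSpace ℝ (Fin n) → ℝ)
    (hhtilde : ∀ x, htilde x = if h x < ξ then ψ (h x) else ψ ξ) :
    ∀ x ∈ D,
      {u ∈ U | fderiv ℝ h x (f x) + fderiv ℝ h x (g x u) + α (h x) ≥ 0} ⊆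
      {u ∈ U | fderiv ℝ htilde x (f x) + fderiv ℝ htilde x (g x u) + α (htilde x) ≥ 0} := by
  obtain rfl : htilde = saturate ψ ξ h := funext hhtilde
  rintro x - u ⟨huU, hu⟩
  refine ⟨huU, ?_⟩
  rcases lt_or_ge (h x) ξ with hlt | hge
  · have hkey := deriv_mul_le_comp (mul_pos hβ hξ).le hαcont hαmono.monotone hα0
      (hαC1.differentiableOn one_ne_zero) hαder hψC1 hψid hψpos hψconc (h x) hlt
    have hψ'x := hψpos (h x) hlt
    rw [(hasFDerivAt_saturate ((hψC1.differentiable one_ne_zero) (h x))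
      ((hh.differentiable one_ne_zero) x).hasFDerivAt hlt).fderiv, saturate_of_lt hlt]
    simp only [smul_apply, smul_eq_mul]
    nlinarith
  · have hψmono := (strictMonoOn_Iic_of_deriv_pos hψC1.continuous hψpos).monotoneOn
    rw [fderiv_saturate_of_le hψmono hge, saturate_of_le hge]
    simp only [zero_apply, zero_add]
    exact (hα0 ▸ hαmono hψξ).le

theorem stmt_14 {n m : ℕ} (ξ β : ℝ) (hξ : 0 < ξ) (hβ : 0 < β) (hβ1 : β < 1)
    (D : Set (EuclideanSpace ℝ (Fin n))) (hD : IsOpen D)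
    (U : Set (EuclideanSpace ℝ (Fin m)))
    (f : EuclideanSpace ℝ (Fin n) → EuclideanSpace ℝ (Fin n))
    (g : EuclideanSpace ℝ (Fin n) → EuclideanSpace ℝ (Fin m) →L[ℝ] EuclideanSpace ℝ (Fin n))
    (h : EuclideanSpace ℝ (Fin n) → ℝ) (hh : ContDiff ℝ 1 h)
    (α : ℝ → ℝ) (hαcont : Continuous α) (hαmono : StrictMono α) (hα0 : α 0 = 0)
    (hαC1 : ContDiffOn ℝ 1 α (Set.Ioo (β * ξ) ξ))
    (hαder : AntitoneOn (deriv α) (Set.Ioo (β * ξ) ξ))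
    -- h is a ZCBF with class-K function α
    (hzcbf : ∀ x ∈ D, ∃ u ∈ U,
      fderiv ℝ h x (f x) + fderiv ℝ h x (g x u) + α (h x) ≥ 0)
    -- ψ: identity below βξ, ψ' > 0 nonincreasing and ψ'' < 0 on (βξ, ξ)
    (ψ : ℝ → ℝ) (hψC1 : ContDiff ℝ 1 ψ)
    (hψid : ∀ η ≤ β * ξ, ψ η = η)
    (hψpos : ∀ η < ξ, 0 < deriv ψ η)
    (hψanti : AntitoneOn (deriv ψ) (Set.Ioo (β * ξ) ξ))
    (hψconc : ∀ η ∈ Set.Ioo (β * ξ) ξ, deriv (deriv ψ) η < 0)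
    (hψξ : 0 < ψ ξ)
    -- the saturated barrier: h̃ = ψ ∘ h below level ξ, constant ψ(ξ) above
    (htilde : EuclideanSpace ℝ (Fin n) → ℝ)
    (hhtilde : ∀ x, htilde x = if h x < ξ then ψ (h x) else ψ ξ) :
    ∀ x ∈ D,
      {u ∈ U | fderiv ℝ h x (f x) + fderiv ℝ h x (g x u) + α (h x) ≥ 0} ⊆
      {u ∈ U | fderiv ℝ htilde x (f x) + fderiv ℝ htilde x (g x u) + α (htilde x) ≥ 0} :=
  stmt_14_general ξ β hξ hβ D U f g h hh α hαcont hαmono hα0 hαC1 hαder ψ hψC1 hψid hψpos hψconc hψξ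
    htilde hhtilde
end
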